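/- arXiv:2305.04132 — 3 statements merged into one kernel-verified Lean document; each statement's English description precedes it below -/
import Mathlib

section
/- Let $B, T, f > 0$ with $f < \frac{2T^3}{3\sqrt{3}\sqrt{B}}$, and let $a$ be the smallest positive root of $-B t^3 + t T^2 - f = 0$. Then $a \in \left(\frac{f}{T^2}, \frac{3f}{2T^2}\right)$. -/
theorem stmt5 (B T f a : ℝ) (hB : 0 < B) (hT : 0 < T) (hf : 0 < f)
    (hfM : f < 2 * T ^ 3 / (3 * Real.sqrt 3 * Real.sqrt B))
    (ha : 0 < a) (hroot : -B * a ^ 3 + a * T ^ 2 - f = 0)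
    (hmin : ∀ t, 0 < t → -B * t ^ 3 + t * T ^ 2 - f = 0 → a ≤ t) :
    f / T ^ 2 < a ∧ a < 3 * f / (2 * T ^ 2) := by
  have hT2 : (0:ℝ) < T ^ 2 := by positivity
  constructor
  · rw [div_lt_iff₀ hT2]
    nlinarith [pow_pos ha 3]
  · set s := Real.sqrt (3 * B) with hs
    have hspos : 0 < s := Real.sqrt_pos.mpr (by positivity)
    have hs2 : s ^ 2 = 3 * B := Real.sq_sqrt (by positivity)
    have hB' : B = s ^ 2 / 3 := by linarith
    set t₀ := T / s with ht0
    have ht0pos : 0 < t₀ := div_pos hT hspos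
    have hsval : s = Real.sqrt 3 * Real.sqrt B := by
      rw [hs, Real.sqrt_mul (by norm_num)]
    have h1 : -B * t₀ ^ 3 + t₀ * T ^ 2 = 2 * T ^ 3 / (3 * s) := by
      rw [ht0, hB']
      field_simp
      ring
    have hp0 : 0 < -B * t₀ ^ 3 + t₀ * T ^ 2 - f := by
      rw [h1]
      have : 2 * T ^ 3 / (3 * s) = 2 * T ^ 3 / (3 * Real.sqrt 3 * Real.sqrt B) := by
        rw [hsval]; ring_nf
      rw [this]
      linarith
    -- IVT to find a root in (0, t₀)
    have hcont : ContinuousOn (fun t : ℝ => -B * t ^ 3 + t * T ^ 2 - f)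
        (Set.Icc 0 t₀) := (by fun_prop : Continuous _).continuousOn
    have hmem : (0:ℝ) ∈ Set.Ioo (-B * (0:ℝ) ^ 3 + 0 * T ^ 2 - f)
        (-B * t₀ ^ 3 + t₀ * T ^ 2 - f) := by
      refine ⟨by norm_num; linarith, hp0⟩
    obtain ⟨r, hr, hPr⟩ := intermediate_value_Ioo (le_of_lt ht0pos) hcont hmem
    have har : a ≤ r := hmin r hr.1 hPr
    have halt : a < t₀ := lt_of_le_of_lt har hr.2
    have hasT : a * s < T := by
      rw [ht0, lt_div_iff₀ hspos] at halt
      exact halt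
    have hBa2 : 3 * B * a ^ 2 < T ^ 2 := by
      nlinarith [mul_pos ha hspos]
    rw [lt_div_iff₀ (by positivity : (0:ℝ) < 2 * T ^ 2)]
    nlinarith [pow_pos ha 3]
end

section
/- The integral of $\|g\|^{-4}$ over $SL(2,\mathbb{R})$ with respect to a Haar measure equals $\pi^2/2$, where $\|g\|$ is the Hilbert–Schmidt (Frobenius) norm and the Haar measure is normalized via the Iwasawa decomposition $g = n_x a k_\theta$ with $n_x = \begin{pmatrix}1 & x\\ 0 & 1\end{pmatrix}$, $a = \mathrm{diag}(\alpha, \alpha^{-1})$, $d\nu = \frac{dx \, d\alpha \, d\theta}{\alpha^3}$ so that $SO(2,\mathbb{R})$ has volume $2\pi$. Equivalently, $2\pi \int_0^\infty \int_{-\infty}^\infty \frac{1}{(\alpha^2 + \alpha^{-2} + x^2\alpha^{-2})^2} \frac{dx\, d\alpha}{\alpha^3} = \frac{\pi^2}{2}$. -/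
/-
Writing `c = √(1 + α⁴)`, one has `1 / ‖n_x a_α‖⁴ = α⁴ / (c² + x²)²`, and the substitution
`x = c t` reduces the inner integral to `∫ (1 + t²)⁻² dt = π / 2`, with antiderivative
`(t / (1 + t²) + arctan t) / 2`. After division by `α³` the outer integrand is
`(π / 4) · 2α / c³`, the derivative of `(π / 4) · α² / c`, which increases from `0` to `π / 4`.
-/

open Real Filter MeasureTheory Set Topology

theorem tendsto_div_one_add_sq_cocompact :
    Tendsto (fun x : ℝ => x / (1 + x ^ 2)) (cocompact ℝ) (𝓝 0) := by
  refine squeeze_zero_norm' ?_ tendsto_norm_cocompact_atTop.inv_tendsto_atTop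
  filter_upwards [tendsto_norm_cocompact_atTop.eventually_gt_atTop 0] with x hx
  show ‖x / (1 + x ^ 2)‖ ≤ ‖x‖⁻¹
  rw [norm_div, Real.norm_of_nonneg (by positivity : (0:ℝ) ≤ 1 + x ^ 2),
    div_le_iff₀ (by positivity), ← sq_abs x, ← Real.norm_eq_abs]
  field_simp
  nlinarith

theorem integrable_inv_one_add_sq_sq : Integrable fun x : ℝ => ((1 + x ^ 2) ^ 2)⁻¹ := by
  refine integrable_inv_one_add_sq.mono' (by fun_prop) (Eventually.of_forall fun x => ?_)
  have h : 1 ≤ 1 + x ^ 2 := le_add_of_nonneg_right (sq_nonneg x)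
  rw [Real.norm_of_nonneg (by positivity)]
  exact inv_anti₀ (by positivity) (le_self_pow₀ h two_ne_zero)

theorem integral_inv_one_add_sq_sq : ∫ x : ℝ, ((1 + x ^ 2) ^ 2)⁻¹ = π / 2 := by
  have hderiv (x : ℝ) :
      HasDerivAt (fun x => (x / (1 + x ^ 2) + arctan x) / 2) ((1 + x ^ 2) ^ 2)⁻¹ x := by
    have hpos : 0 < 1 + x ^ 2 := by positivity
    refine ((((hasDerivAt_id' x).fun_div ((hasDerivAt_pow 2 x).const_add 1) hpos.ne').add
      (hasDerivAt_arctan x)).div_const 2).congr_deriv ?_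
    field_simp
    ring
  have hlim (l : Filter ℝ) (hl : l ≤ cocompact ℝ) {a : ℝ} (ha : Tendsto arctan l (𝓝 a)) :
      Tendsto (fun x => (x / (1 + x ^ 2) + arctan x) / 2) l (𝓝 (a / 2)) := by
    simpa using ((tendsto_div_one_add_sq_cocompact.mono_left hl).add ha).div_const 2
  rw [integral_of_hasDerivAt_of_tendsto hderiv integrable_inv_one_add_sq_sq
    (hlim _ atBot_le_cocompact (tendsto_nhds_of_tendsto_nhdsWithin tendsto_arctan_atBot))
    (hlim _ atTop_le_cocompact (tendsto_nhds_of_tendsto_nhdsWithin tendsto_arctan_atTop))]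
  ring

theorem integral_inv_sq_add_sq_sq {c : ℝ} (hc : 0 < c) :
    ∫ x : ℝ, ((c ^ 2 + x ^ 2) ^ 2)⁻¹ = π / (2 * c ^ 3) := by
  have hscale (x : ℝ) : ((c ^ 2 + x ^ 2) ^ 2)⁻¹ = (c ^ 4)⁻¹ * ((1 + (x / c) ^ 2) ^ 2)⁻¹ := by
    field_simp
  simp_rw [hscale, integral_const_mul,
    Measure.integral_comp_div (fun y => ((1 + y ^ 2) ^ 2)⁻¹), integral_inv_one_add_sq_sq,
    abs_of_pos hc, smul_eq_mul]
  field_simp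

-- `‖n_x diag(α, α⁻¹) k_θ‖²` for the Frobenius norm; it does not depend on `θ`.
noncomputable def iwasawaNormSq (α x : ℝ) : ℝ := α ^ 2 + 1 / α ^ 2 + x ^ 2 / α ^ 2

theorem integral_inv_iwasawaNormSq_sq {α : ℝ} (hα : 0 < α) :
    ∫ x, 1 / iwasawaNormSq α x ^ 2 = π * α ^ 4 / (2 * √(1 + α ^ 4) ^ 3) := by
  have hsq : √(1 + α ^ 4) ^ 2 = 1 + α ^ 4 := sq_sqrt (by positivity)
  have hrewrite (x : ℝ) :
      1 / iwasawaNormSq α x ^ 2 = α ^ 4 * ((√(1 + α ^ 4) ^ 2 + x ^ 2) ^ 2)⁻¹ := by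
    rw [iwasawaNormSq, hsq]
    field_simp
    ring
  have hc : 0 < √(1 + α ^ 4) := sqrt_pos.2 (by positivity)
  simp_rw [hrewrite, integral_const_mul, integral_inv_sq_add_sq_sq hc]
  ring

theorem hasDerivAt_sq_div_sqrt_one_add_pow_four (α : ℝ) :
    HasDerivAt (fun α => α ^ 2 / √(1 + α ^ 4)) (2 * α / √(1 + α ^ 4) ^ 3) α := by
  have hpos : 0 < 1 + α ^ 4 := by positivity
  have hsq : √(1 + α ^ 4) ^ 2 = 1 + α ^ 4 := sq_sqrt hpos.le
  refine ((hasDerivAt_pow 2 α).fun_div (((hasDerivAt_pow 4 α).const_add 1).sqrt hpos.ne')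
    (sqrt_pos.2 hpos).ne').congr_deriv ?_
  field_simp
  linear_combination 4 * α * hsq

theorem tendsto_sq_div_sqrt_one_add_pow_four_atTop :
    Tendsto (fun α : ℝ => α ^ 2 / √(1 + α ^ 4)) atTop (𝓝 1) := by
  have hlim : Tendsto (fun α : ℝ => √(1 - (1 + α ^ 4)⁻¹)) atTop (𝓝 1) := by
    simpa using ((tendsto_atTop_add_const_left _ 1 (tendsto_pow_atTop (by norm_num))
      ).inv_tendsto_atTop.const_sub 1).sqrt
  refine hlim.congr fun α => ?_
  have hpos : 0 < 1 + α ^ 4 := by positivity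
  rw [show 1 - (1 + α ^ 4)⁻¹ = (α ^ 2) ^ 2 / (1 + α ^ 4) by field_simp; ring,
    sqrt_div' _ hpos.le, sqrt_sq (sq_nonneg α)]

theorem integral_Ioi_two_mul_div_sqrt_one_add_pow_four_pow_three :
    ∫ α in Ioi (0 : ℝ), 2 * α / √(1 + α ^ 4) ^ 3 = 1 := by
  rw [integral_Ioi_of_hasDerivAt_of_nonneg' (fun α _ => hasDerivAt_sq_div_sqrt_one_add_pow_four α)
    (fun α (hα : 0 < α) => by positivity) tendsto_sq_div_sqrt_one_add_pow_four_atTop]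
  simp

/-- The integral of `‖g‖⁻⁴` (Frobenius norm) over `SL(2,ℝ)` with respect to the Haar
measure coming from the Iwasawa decomposition `g = n_x diag(α,α⁻¹) k_θ`
(with `SO(2)` of volume `2π`) equals `π²/2`:
`2π ∫₀^∞ ∫_ℝ (α² + α⁻² + x²α⁻²)⁻² dx dα/α³ = π²/2`. -/
theorem stmt7 :
    2 * Real.pi * ∫ α in Set.Ioi (0 : ℝ),
      (∫ x : ℝ, 1 / (α ^ 2 + 1 / α ^ 2 + x ^ 2 / α ^ 2) ^ 2) / α ^ 3 =
      Real.pi ^ 2 / 2 := by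
  change 2 * π * ∫ α in Ioi 0, (∫ x, 1 / iwasawaNormSq α x ^ 2) / α ^ 3 = π ^ 2 / 2
  have hinner : EqOn (fun α => (∫ x, 1 / iwasawaNormSq α x ^ 2) / α ^ 3)
      (fun α => π / 4 * (2 * α / √(1 + α ^ 4) ^ 3)) (Ioi 0) := fun α hα => by
    simp only [integral_inv_iwasawaNormSq_sq hα]
    field_simp
    ring
  rw [setIntegral_congr_fun measurableSet_Ioi hinner, integral_const_mul,
    integral_Ioi_two_mul_div_sqrt_one_add_pow_four_pow_three]
  ring
end

section
/- Let $B, T, f, \sqrt{M_T} > 0$ with $M_T = \frac{2T^3}{3\sqrt{3}\sqrt{B}}$ and $f < M_T$; let $0 < a < b$ be the two positive roots of $-Bt^3 + tT^2 - f$. Suppose additionally $f \le T^2$. Then $a = \frac{f}{T^2}\left(1 + O\left(\frac{1}{T^2}\right)\right)$ as $T \to \infty$ (with implied constant depending on $B$), and consequently $\frac{T^2}{2a^2} - \frac{f}{3a^3} = \frac{T^6}{6 f^2} + \frac{1}{f^2} O(T^4)$. -/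
/-!
The cubic `p(t) = -B t³ + t T² - f` satisfies `p(0) = -f < 0` and `p(t_c) = M_T - f > 0` at
its critical point `t_c = T / √(3B)`, so it has a root in `(0, t_c]` and the smallest positive
root `a` lies there, i.e. `3 B a² ≤ T²`. Writing the root equation as `f = a (T² - B a²)`,
this gives `T² - B a² ≥ 2T²/3`, hence `a ≤ 3/2` when `f ≤ T²`, and then both estimates are explicit:
`a - f/T² = B a³ / T²`, and with `u = T² - B a²`, `v = B a²` one has
`3 T² u² - 2 u³ - T⁶ = -v² (3u + v)`.
-/

section
variable {B T a f : ℝ}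

lemma three_mul_mul_critical_sq (hB : 0 < B) : 3 * B * (T / √(3 * B)) ^ 2 = T ^ 2 := by
  have hs : √(3 * B) ^ 2 = 3 * B := Real.sq_sqrt (by positivity)
  field_simp
  rw [hs]
  ring

lemma cubic_eval_critical (hB : 0 < B) :
    -B * (T / √(3 * B)) ^ 3 + T / √(3 * B) * T ^ 2 = 2 * T ^ 3 / (3 * √3 * √B) := by
  rw [mul_assoc (3 : ℝ), ← Real.sqrt_mul (by norm_num)]
  have hs : √(3 * B) ^ 2 = 3 * B := Real.sq_sqrt (by positivity)
  have hs0 : √(3 * B) ≠ 0 := by positivity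
  generalize √(3 * B) = s at hs hs0 ⊢
  field_simp
  linear_combination T ^ 3 * hs

lemma exists_pos_root_three_mul_mul_sq_le (hB : 0 < B) (hT : 0 < T) (hf : 0 < f)
    (hfM : f < 2 * T ^ 3 / (3 * √3 * √B)) :
    ∃ r, 0 < r ∧ 3 * B * r ^ 2 ≤ T ^ 2 ∧ -B * r ^ 3 + r * T ^ 2 - f = 0 := by
  set c := T / √(3 * B)
  have hc : 0 < c := by positivity
  have hcont : Continuous fun t : ℝ => -B * t ^ 3 + t * T ^ 2 - f := by fun_prop
  obtain ⟨r, ⟨hr0, hrc⟩, hr⟩ := intermediate_value_Icc hc.le hcont.continuousOn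
    (show (0 : ℝ) ∈ Set.Icc _ _ from
      ⟨by simp [hf.le], by rw [cubic_eval_critical hB]; linarith⟩)
  have hr0 : 0 < r := hr0.lt_of_ne (by rintro rfl; simp [hf.ne'] at hr)
  refine ⟨r, hr0, ?_, hr⟩
  calc 3 * B * r ^ 2 ≤ 3 * B * c ^ 2 := by gcongr
    _ = T ^ 2 := three_mul_mul_critical_sq hB

lemma le_three_halves (hT : T ≠ 0) (ha : 0 < a) (hcrit : 3 * B * a ^ 2 ≤ T ^ 2)
    (hfT : a * (T ^ 2 - B * a ^ 2) ≤ T ^ 2) : a ≤ 3 / 2 := by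
  have hT2 : 0 < T ^ 2 := by positivity
  nlinarith

lemma abs_sub_div_sq_le (hB : 0 ≤ B) (hT : T ≠ 0) (ha : 0 < a)
    (hcrit : 3 * B * a ^ 2 ≤ T ^ 2) (ha32 : a ≤ 3 / 2) :
    |a - a * (T ^ 2 - B * a ^ 2) / T ^ 2|
      ≤ 4 * B * (a * (T ^ 2 - B * a ^ 2) / T ^ 2) * (1 / T ^ 2) := by
  have hT2 : 0 < T ^ 2 := by positivity
  have hsub : a - a * (T ^ 2 - B * a ^ 2) / T ^ 2 = B * a ^ 3 / T ^ 2 := by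
    field_simp
    ring
  have key : B * a ^ 2 * T ^ 2 ≤ 4 * B * (T ^ 2 - B * a ^ 2) := by
    have : a ^ 2 ≤ 9 / 4 := by nlinarith
    nlinarith [mul_le_mul_of_nonneg_left this (mul_nonneg hB hT2.le)]
  rw [hsub, abs_of_nonneg (by positivity)]
  calc B * a ^ 3 / T ^ 2 = B * a ^ 2 * T ^ 2 * a / T ^ 4 := by field_simp
    _ ≤ 4 * B * (T ^ 2 - B * a ^ 2) * a / T ^ 4 := by gcongr
    _ = 4 * B * (a * (T ^ 2 - B * a ^ 2) / T ^ 2) * (1 / T ^ 2) := by ring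

lemma energy_sub_eq (ha : a ≠ 0) (hu : T ^ 2 - B * a ^ 2 ≠ 0) :
    T ^ 2 / (2 * a ^ 2) - a * (T ^ 2 - B * a ^ 2) / (3 * a ^ 3)
        - T ^ 6 / (6 * (a * (T ^ 2 - B * a ^ 2)) ^ 2)
      = -(B ^ 2 * a ^ 2 * (3 * T ^ 2 - 2 * B * a ^ 2) / (6 * (T ^ 2 - B * a ^ 2) ^ 2)) := by
  rw [div_sub_div _ _ (by positivity) (by positivity),
    div_sub_div _ _ (by positivity) (by positivity), neg_div',
    div_eq_div_iff (by positivity) (by positivity)]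
  ring

lemma abs_energy_sub_le (hB : 0 ≤ B) (hT : 1 ≤ T) (ha : 0 < a)
    (hcrit : 3 * B * a ^ 2 ≤ T ^ 2) (ha32 : a ≤ 3 / 2) :
    |T ^ 2 / (2 * a ^ 2) - a * (T ^ 2 - B * a ^ 2) / (3 * a ^ 3)
        - T ^ 6 / (6 * (a * (T ^ 2 - B * a ^ 2)) ^ 2)|
      ≤ 3 * B ^ 2 * T ^ 4 / (a * (T ^ 2 - B * a ^ 2)) ^ 2 := by
  have hu : 0 < T ^ 2 - B * a ^ 2 := by nlinarith
  have hgap : 0 ≤ 3 * T ^ 2 - 2 * B * a ^ 2 := by nlinarith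
  have key : B ^ 2 * a ^ 4 * (3 * T ^ 2 - 2 * B * a ^ 2) ≤ 6 * (3 * B ^ 2 * T ^ 4) :=
    calc B ^ 2 * a ^ 4 * (3 * T ^ 2 - 2 * B * a ^ 2) ≤ B ^ 2 * (3 / 2) ^ 4 * (3 * T ^ 4) := by
          gcongr
          nlinarith [one_le_pow₀ (n := 2) hT, mul_nonneg hB (sq_nonneg a)]
      _ ≤ 6 * (3 * B ^ 2 * T ^ 4) := by nlinarith [sq_nonneg B, pow_pos (one_pos.trans_le hT) 4]
  rw [energy_sub_eq ha.ne' hu.ne', abs_neg, abs_of_nonneg (by positivity)]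
  calc B ^ 2 * a ^ 2 * (3 * T ^ 2 - 2 * B * a ^ 2) / (6 * (T ^ 2 - B * a ^ 2) ^ 2)
      = B ^ 2 * a ^ 4 * (3 * T ^ 2 - 2 * B * a ^ 2) / (6 * (a * (T ^ 2 - B * a ^ 2)) ^ 2) := by
        field_simp
    _ ≤ 6 * (3 * B ^ 2 * T ^ 4) / (6 * (a * (T ^ 2 - B * a ^ 2)) ^ 2) := by gcongr
    _ = 3 * B ^ 2 * T ^ 4 / (a * (T ^ 2 - B * a ^ 2)) ^ 2 := mul_div_mul_left _ _ (by norm_num)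

end

/-- Asymptotics of the smallest positive root `a` of `-Bt³ + tT² - f`:
if `f ≤ T²` (and `f` below the critical value `M_T`), then `a = (f/T²)(1 + O(1/T²))`
as `T → ∞`, and consequently `T²/(2a²) - f/(3a³) = T⁶/(6f²) + (1/f²)O(T⁴)`. -/
theorem stmt19 (B : ℝ) (hB : 0 < B) :
    ∃ C > 0, ∃ T₀ > 0, ∀ T ≥ T₀, ∀ f : ℝ, 0 < f →
      f < 2 * T ^ 3 / (3 * Real.sqrt 3 * Real.sqrt B) → f ≤ T ^ 2 →
      ∀ a : ℝ, 0 < a → -B * a ^ 3 + a * T ^ 2 - f = 0 →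
      (∀ s, 0 < s → -B * s ^ 3 + s * T ^ 2 - f = 0 → a ≤ s) →
      |a - f / T ^ 2| ≤ C * (f / T ^ 2) * (1 / T ^ 2) ∧
      |T ^ 2 / (2 * a ^ 2) - f / (3 * a ^ 3) - T ^ 6 / (6 * f ^ 2)| ≤
        C * T ^ 4 / f ^ 2 := by
  refine ⟨4 * B + 3 * B ^ 2, by positivity, 1, one_pos, ?_⟩
  intro T hT f hf hfM hfT a ha hroot hmin
  have hT0 : 0 < T := one_pos.trans_le hT
  obtain ⟨r, hr, hr_crit, hr_root⟩ := exists_pos_root_three_mul_mul_sq_le hB hT0 hf hfM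
  have hcrit : 3 * B * a ^ 2 ≤ T ^ 2 :=
    le_trans (by gcongr; exact hmin r hr hr_root) hr_crit
  obtain rfl : f = a * (T ^ 2 - B * a ^ 2) := by linear_combination -hroot
  have ha32 := le_three_halves hT0.ne' ha hcrit hfT
  constructor
  · refine (abs_sub_div_sq_le hB.le hT0.ne' ha hcrit ha32).trans ?_
    gcongr
    exact le_add_of_nonneg_right (by positivity)
  · refine (abs_energy_sub_le hB.le hT ha hcrit ha32).trans ?_
    gcongr
    exact le_add_of_nonneg_left (by positivity)
end
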